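/- arXiv:2601.23199 — 2 statements merged into one kernel-verified Lean document; each statement's English description precedes it below -/
import Mathlib

section
/- Let E₁ and E₂ be vector spaces over a field k₀, and let λ₁, λ₂ : E₁ × E₂ → k₀ be bilinear forms. Suppose that for all v₁ ∈ E₁ and v₂ ∈ E₂, λ₁(v₁, v₂) = 0 implies λ₂(v₁, v₂) = 0. Then there exists a scalar a ∈ k₀ such that λ₂ = a • λ₁. -/
/-!
For fixed `v₁`, the functionals `λ₁ v₁` and `λ₂ v₁` on `E₂` have nested kernels, so
`λ₂ v₁ = a(v₁) • λ₁ v₁`. The ratio `a(v₁)` does not depend on `v₁`: when `λ₁ u` and `λ₁ v`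
are independent, expanding `λ₂ (u + v)` forces `a(u) = a(u + v) = a(v)`; when they are
proportional, `λ₁ (v - c • u) = 0` forces `λ₂ (v - c • u) = 0`.
-/

namespace LinearMap

variable {K M N : Type*} [Field K] [AddCommGroup M] [Module K M] [AddCommGroup N] [Module K N]

theorem exists_eq_smul_of_ker_le_ker {f g : M →ₗ[K] K} (h : ker f ≤ ker g) :
    ∃ a : K, g = a • f := by
  have hg : g ∈ Submodule.span K (Set.range fun _ : Unit => f) :=
    mem_span_of_iInf_ker_le_ker (by simpa using h)
  obtain ⟨a, ha⟩ := Submodule.mem_span_singleton.mp (by simpa using hg)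
  exact ⟨a, ha.symm⟩

theorem exists_eq_smul_of_forall_exists_eq_smul {S T : M →ₗ[K] N}
    (h : ∀ v, ∃ a : K, T v = a • S v) : ∃ a : K, T = a • S := by
  have hker : ∀ v, S v = 0 → T v = 0 := fun v hv => by
    obtain ⟨b, hb⟩ := h v
    rw [hb, hv, smul_zero]
  by_cases hS : ∀ u, S u = 0
  · exact ⟨0, ext fun v => by simp [hker v (hS v)]⟩
  push Not at hS
  obtain ⟨u, hu⟩ := hS
  obtain ⟨a, ha⟩ := h u
  refine ⟨a, ext fun v => ?_⟩
  rw [smul_apply]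
  by_cases hind : LinearIndependent K ![S u, S v]
  · obtain ⟨b, hb⟩ := h v
    obtain ⟨c, hc⟩ := h (u + v)
    have hsum : (a - c) • S u + (b - c) • S v = 0 := by
      simp only [map_add, ha, hb, smul_add] at hc
      rw [sub_smul, sub_smul, sub_add_sub_comm, hc, sub_self]
    obtain ⟨hac, hbc⟩ := LinearIndependent.pair_iff.mp hind _ _ hsum
    rw [hb, sub_eq_zero.mp hbc, sub_eq_zero.mp hac]
  · obtain ⟨c, hc⟩ : ∃ c : K, c • S u = S v := by
      simpa [LinearIndependent.pair_iff' hu] using hind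
    have hTv : T v = c • T u := by
      rw [← sub_eq_zero, ← map_smul, ← map_sub]
      exact hker _ (by rw [map_sub, map_smul, hc, sub_self])
    rw [hTv, ha, smul_comm, hc]

end LinearMap

/-- Let `E₁` and `E₂` be vector spaces over a field `k₀`, and let `λ₁, λ₂ : E₁ × E₂ → k₀` be
bilinear forms. Suppose that for all `v₁ ∈ E₁` and `v₂ ∈ E₂`, `λ₁(v₁, v₂) = 0` implies
`λ₂(v₁, v₂) = 0`. Then there exists a scalar `a ∈ k₀` such that `λ₂ = a • λ₁`. -/
theorem stmt0 (k₀ : Type*) [Field k₀] (E₁ E₂ : Type*)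
    [AddCommGroup E₁] [Module k₀ E₁] [AddCommGroup E₂] [Module k₀ E₂]
    (lam₁ lam₂ : E₁ →ₗ[k₀] E₂ →ₗ[k₀] k₀)
    (h : ∀ (v₁ : E₁) (v₂ : E₂), lam₁ v₁ v₂ = 0 → lam₂ v₁ v₂ = 0) :
    ∃ a : k₀, lam₂ = a • lam₁ :=
  LinearMap.exists_eq_smul_of_forall_exists_eq_smul fun v₁ =>
    LinearMap.exists_eq_smul_of_ker_le_ker fun v₂ => h v₁ v₂
end

section
/- Let R be a (possibly non-unital) ring and M a simple left R-module with R • M = M. If λ, λ' ∈ M are such that for all r ∈ R, r • λ = 0 implies r • λ' = 0, and the endomorphism ring of M as an R-module consists of scalar multiplications by a field k₀ acting on M, then λ' is a scalar multiple of λ. -/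
/-!
If `r • λ` determines `r • λ'`, then `r • λ ↦ r • λ'` is a well-defined `R`-linear endomorphism
of `M` (the orbit map of `λ` is onto by simplicity, unless `λ` is killed by `R`), hence a scalar
`a`. So `λ' - a • λ` is killed by all of `R`; the elements killed by `R` form a submodule, which
is not all of `M` because `R • M = M`, so it is zero.
-/

namespace AddMonoidHom

variable {R M : Type*} [NonUnitalRing R] [AddCommGroup M] {ρ : R →+ M →+ M}

theorem apply_mem_ker_flip (hassoc : ∀ (r s : R) (m : M), ρ (r * s) m = ρ r (ρ s m))
    (r : R) {m : M} (hm : m ∈ ρ.flip.ker) : ρ r m ∈ ρ.flip.ker := by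
  ext s
  simpa [← hassoc] using congr($hm (s * r))

theorem apply_mem_range_flip (hassoc : ∀ (r s : R) (m : M), ρ (r * s) m = ρ r (ρ s m))
    (r : R) {lam m : M} (hm : m ∈ (ρ.flip lam).range) : ρ r m ∈ (ρ.flip lam).range := by
  obtain ⟨s, rfl⟩ := hm
  exact ⟨r * s, hassoc r s lam⟩

theorem eq_zero_of_forall_apply_eq_zero
    (hassoc : ∀ (r s : R) (m : M), ρ (r * s) m = ρ r (ρ s m))
    (hRM : AddSubgroup.closure {m : M | ∃ (r : R) (x : M), ρ r x = m} = ⊤)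
    (hsimple : ∀ N : AddSubgroup M, (∀ r : R, ∀ x ∈ N, ρ r x ∈ N) → N = ⊥ ∨ N = ⊤)
    {m : M} (hm : ∀ r : R, ρ r m = 0) : m = 0 := by
  have hm_ker : m ∈ ρ.flip.ker := by ext r; exact hm r
  obtain hbot | htop := hsimple ρ.flip.ker fun r _ ↦ apply_mem_ker_flip hassoc r
  · simpa [hbot] using hm_ker
  · have hgen : {m : M | ∃ (r : R) (x : M), ρ r x = m} ⊆ (⊥ : AddSubgroup M) := by
      rintro _ ⟨r, x, rfl⟩
      have hx : x ∈ ρ.flip.ker := htop ▸ AddSubgroup.mem_top x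
      exact congr($hx r)
    have htop_le_bot : (⊤ : AddSubgroup M) ≤ ⊥ := hRM ▸ (AddSubgroup.closure_le ⊥).2 hgen
    exact htop_le_bot (AddSubgroup.mem_top m)

theorem exists_intertwiner_apply_eq
    (hassoc : ∀ (r s : R) (m : M), ρ (r * s) m = ρ r (ρ s m))
    (hsimple : ∀ N : AddSubgroup M, (∀ r : R, ∀ x ∈ N, ρ r x ∈ N) → N = ⊥ ∨ N = ⊤)
    {lam lam' : M} (h : ∀ r : R, ρ r lam = 0 → ρ r lam' = 0) :
    ∃ f : M →+ M, (∀ (r : R) (m : M), f (ρ r m) = ρ r (f m)) ∧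
      ∀ r : R, f (ρ r lam) = ρ r lam' := by
  obtain hbot | htop := hsimple (ρ.flip lam).range fun r _ ↦ apply_mem_range_flip hassoc r
  · refine ⟨0, by simp, fun r ↦ ?_⟩
    have hr : ρ r lam ∈ (ρ.flip lam).range := ⟨r, rfl⟩
    rw [hbot, AddSubgroup.mem_bot] at hr
    simp [h r hr]
  · have hsurj : Function.Surjective (ρ.flip lam) := AddMonoidHom.range_eq_top.1 htop
    set f := (ρ.flip lam).liftOfSurjective hsurj ⟨ρ.flip lam', fun r hr ↦ h r hr⟩
    have hf : ∀ r : R, f (ρ r lam) = ρ r lam' := liftOfRightInverse_comp_apply _ _ _ _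
    refine ⟨f, fun r m ↦ ?_, hf⟩
    obtain ⟨s, rfl⟩ := hsurj m
    simp only [flip_apply]
    rw [← hassoc, hf, hf, hassoc]

end AddMonoidHom

theorem stmt2_general (R : Type*) [NonUnitalRing R] (M : Type*) [AddCommGroup M]
    (k₀ : Type*) [Field k₀] [Module k₀ M]
    (ρ : R →+ M →+ M)
    -- `ρ` is a (non-unital) module structure:
    (hassoc : ∀ (r s : R) (m : M), ρ (r * s) m = ρ r (ρ s m))
    -- the `k₀`-action commutes with the `R`-action:
    (hcomm : ∀ (r : R) (a : k₀) (m : M), ρ r (a • m) = a • ρ r m)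
    -- `R • M = M`:
    (hRM : AddSubgroup.closure {m : M | ∃ (r : R) (x : M), ρ r x = m} = ⊤)
    -- `M` is a simple `R`-module:
    (hsimple : ∀ N : AddSubgroup M, (∀ r : R, ∀ x ∈ N, ρ r x ∈ N) → N = ⊥ ∨ N = ⊤)
    -- every `R`-module endomorphism of `M` is a scalar multiplication by an element of `k₀`:
    (hschur : ∀ f : M →+ M, (∀ (r : R) (m : M), f (ρ r m) = ρ r (f m)) →
      ∃ a : k₀, ∀ m : M, f m = a • m)
    (lam lam' : M)
    (h : ∀ r : R, ρ r lam = 0 → ρ r lam' = 0) :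
    ∃ a : k₀, lam' = a • lam := by
  obtain ⟨f, hf_comm, hf⟩ := AddMonoidHom.exists_intertwiner_apply_eq hassoc hsimple h
  obtain ⟨a, ha⟩ := hschur f hf_comm
  refine ⟨a, sub_eq_zero.1 (AddMonoidHom.eq_zero_of_forall_apply_eq_zero hassoc hRM hsimple
    fun r ↦ ?_)⟩
  rw [map_sub, hcomm, ← hf, ha, sub_self]

/-- Let `R` be a (possibly non-unital) ring and `M` a simple left `R`-module with `R • M = M`.
If `λ, λ' ∈ M` are such that for all `r ∈ R`, `r • λ = 0` implies `r • λ' = 0`, and the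
endomorphism ring of `M` as an `R`-module consists of scalar multiplications by a field `k₀`
acting on `M` (commuting with the `R`-action), then `λ'` is a scalar multiple of `λ`.

The (possibly non-unital) action of `R` on `M` is encoded by a biadditive map
`ρ : R →+ M →+ M` satisfying `ρ (r * s) = ρ r ∘ ρ s`. -/
theorem stmt2 (R : Type*) [NonUnitalRing R] (M : Type*) [AddCommGroup M]
    (k₀ : Type*) [Field k₀] [Module k₀ M]
    (ρ : R →+ M →+ M)
    -- `ρ` is a (non-unital) module structure:
    (hassoc : ∀ (r s : R) (m : M), ρ (r * s) m = ρ r (ρ s m))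
    -- the `k₀`-action commutes with the `R`-action:
    (hcomm : ∀ (r : R) (a : k₀) (m : M), ρ r (a • m) = a • ρ r m)
    -- `M` is nonzero:
    (hMne : ∃ m : M, m ≠ 0)
    -- `R • M = M`:
    (hRM : AddSubgroup.closure {m : M | ∃ (r : R) (x : M), ρ r x = m} = ⊤)
    -- `M` is a simple `R`-module:
    (hsimple : ∀ N : AddSubgroup M, (∀ r : R, ∀ x ∈ N, ρ r x ∈ N) → N = ⊥ ∨ N = ⊤)
    -- every `R`-module endomorphism of `M` is a scalar multiplication by an element of `k₀`:
    (hschur : ∀ f : M →+ M, (∀ (r : R) (m : M), f (ρ r m) = ρ r (f m)) →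
      ∃ a : k₀, ∀ m : M, f m = a • m)
    (lam lam' : M)
    (h : ∀ r : R, ρ r lam = 0 → ρ r lam' = 0) :
    ∃ a : k₀, lam' = a • lam :=
  stmt2_general R M k₀ ρ hassoc hcomm hRM hsimple hschur lam lam' h
end
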